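/- (Full measure of the Fayad–Kanigowski Ratner condition) For Lebesgue-almost every α ∈ (0,1) there exists C > 0 such that, setting K(α) := {k ∈ ℕ : k ≥ 2 and a_{k+1}(α) ≤ C · (log q_k(α))^(7/8)}, the series ∑_{k ≥ 2, k ∉ K(α)} 1/(log q_k(α))^(7/8) converges, where a_n(α) are the continued fraction entries of α and q_n(α) the denominators of its convergents. -/

import Mathlib

open MeasureTheory Set Real Filter Topology

/-- The Gauss map `G(x) = {1/x}` (with `G(0) = 0`). -/
noncomputable def gaussMap (x : ℝ) : ℝ := if x = 0 then 0 else Int.fract (1 / x)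

/-- The continued fraction entries of `α`: `a_n(α) = ⌊1 / G^[n-1](α)⌋` for `n ≥ 1`. -/
noncomputable def cfA (α : ℝ) (n : ℕ) : ℤ := ⌊1 / gaussMap^[n - 1] α⌋

/-- The denominators of the convergents of `α`:
`q_0 = 1`, `q_1 = a_1(α)`, `q_{n+1} = a_{n+1}(α) q_n + q_{n-1}`. -/
noncomputable def cfQ (α : ℝ) : ℕ → ℤ
  | 0 => 1
  | 1 => cfA α 1
  | (n + 2) => cfA α (n + 2) * cfQ α (n + 1) + cfQ α n



lemma gaussMap_measurable : Measurable gaussMap := by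
  unfold gaussMap
  refine Measurable.ite (measurableSet_singleton 0) measurable_const ?_
  have : Measurable fun x : ℝ => 1 / x := by
    simpa [one_div] using measurable_inv
  exact this.fract

lemma gaussMap_mem (x : ℝ) (hx : x ∈ Ioo (0:ℝ) 1) (hirr : Irrational x) :
    gaussMap x ∈ Ioo (0:ℝ) 1 ∧ Irrational (gaussMap x) := by
  have hx0 : x ≠ 0 := ne_of_gt hx.1
  have hg : gaussMap x = Int.fract (1/x) := by simp [gaussMap, hx0]
  rw [hg]
  have hirr' : Irrational (1/x) := by
    simpa [one_div] using hirr.inv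
  have hfr : Irrational (Int.fract (1/x)) := by
    have h2 : Int.fract (1/x) = 1/x - (⌊1/x⌋ : ℤ) :=
      (Int.self_sub_floor _).symm
    rw [h2]
    exact hirr'.sub_intCast _
  refine ⟨⟨?_, Int.fract_lt_one _⟩, hfr⟩
  rcases lt_or_eq_of_le (Int.fract_nonneg (1/x)) with h | h
  · exact h
  · exact absurd h.symm (by simpa using hfr.ne_int 0)


noncomputable def gaussμ : Measure ℝ :=
  (volume.restrict (Ioo (0:ℝ) 1)).withDensity fun x => ENNReal.ofReal ((1+x)⁻¹)

lemma gaussμ_apply {s : Set ℝ} (hs : MeasurableSet s) :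
    gaussμ s = ∫⁻ x in s ∩ Ioo (0:ℝ) 1, ENNReal.ofReal ((1+x)⁻¹) ∂volume := by
  rw [gaussμ, withDensity_apply _ hs, Measure.restrict_restrict hs]

lemma gaussμ_Icc {c b : ℝ} (h0 : 0 ≤ c) (hcb : c ≤ b) (hb1 : b ≤ 1) :
    gaussμ (Icc c b) = ENNReal.ofReal (Real.log (1+b) - Real.log (1+c)) := by
  rw [gaussμ_apply measurableSet_Icc]
  have hae : (Icc c b ∩ Ioo (0:ℝ) 1 : Set ℝ) =ᵐ[volume] Ioo c b := by
    have h1 : Ioo c b ⊆ Icc c b ∩ Ioo (0:ℝ) 1 := fun x hx =>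
      ⟨⟨hx.1.le, hx.2.le⟩, lt_of_le_of_lt h0 hx.1, lt_of_lt_of_le hx.2 hb1⟩
    have h2 : (Icc c b ∩ Ioo (0:ℝ) 1) \ Ioo c b ⊆ ({c} ∪ {b} : Set ℝ) := by
      intro x hx
      rcases hx with ⟨⟨hx1, hx2⟩, hx3⟩
      rcases eq_or_lt_of_le hx1.1 with h | h
      · exact Or.inl h.symm
      rcases eq_or_lt_of_le hx1.2 with h' | h'
      · exact Or.inr h'
      exact absurd ⟨h, h'⟩ hx3
    refine (MeasureTheory.ae_eq_set).2 ⟨measure_mono_null h2 ?_, ?_⟩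
    · exact measure_union_null (measure_singleton c) (measure_singleton b)
    · rw [Set.diff_eq_empty.2 h1]; simp
  rw [setLIntegral_congr hae]
  have hcont : ContinuousOn (fun x : ℝ => (1+x)⁻¹) (Icc c b) := by
    apply ContinuousOn.inv₀ (by fun_prop)
    intro x hx
    have hx0 : (0:ℝ) ≤ x := h0.trans hx.1
    positivity
  have hint : IntegrableOn (fun x : ℝ => (1+x)⁻¹) (Ioo c b) volume :=
    (hcont.integrableOn_Icc).mono_set Ioo_subset_Icc_self
  rw [← ofReal_integral_eq_lintegral_ofReal hint]
  · congr 1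
    have : ∫ x in Ioo c b, (1+x)⁻¹ = ∫ x in c..b, (1+x)⁻¹ := by
      rw [intervalIntegral.integral_of_le hcb, MeasureTheory.integral_Ioc_eq_integral_Ioo]
    rw [this]
    have hsub : ∫ x in c..b, (1+x)⁻¹ = ∫ x in (1+c)..(1+b), x⁻¹ := by
      simpa using intervalIntegral.integral_comp_add_left (a := c) (b := b) (fun x => x⁻¹) 1
    have hc0 : (0:ℝ) < 1 + c := by linarith
    have hb0 : (0:ℝ) < 1 + b := by linarith
    rw [hsub, integral_inv (by
      rw [Set.uIcc_of_le (by linarith)]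
      intro h
      exact absurd h.1 (by linarith))]
    rw [Real.log_div (ne_of_gt hb0) (ne_of_gt hc0)]
  · filter_upwards [self_mem_ae_restrict measurableSet_Ioo] with x hx
    have : (0:ℝ) < 1 + x := by nlinarith [hx.1, h0]
    positivity

lemma gauss_telescope {a : ℝ} (ha : 0 ≤ a) :
    ∑' n : ℕ, ENNReal.ofReal
        (Real.log (1+((n:ℝ)+1)⁻¹) - Real.log (1+((n:ℝ)+1+a)⁻¹))
      = ENNReal.ofReal (Real.log (1+a)) := by
  set t : ℕ → ℝ := fun n => Real.log (1+((n:ℝ)+1)⁻¹) - Real.log (1+((n:ℝ)+1+a)⁻¹) with htdef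
  set u : ℕ → ℝ := fun n => Real.log (((n:ℝ)+1+a)/((n:ℝ)+1)) with hudef
  have hpos : ∀ n : ℕ, (0:ℝ) < (n:ℝ)+1 := fun n => by positivity
  have hposa : ∀ n : ℕ, (0:ℝ) < (n:ℝ)+1+a := fun n => by positivity
  have ht : ∀ n : ℕ, t n = u n - u (n+1) := by
    intro n
    have e1 : Real.log (1+((n:ℝ)+1)⁻¹) = Real.log ((n:ℝ)+2) - Real.log ((n:ℝ)+1) := by
      rw [show (1:ℝ)+((n:ℝ)+1)⁻¹ = ((n:ℝ)+2)/((n:ℝ)+1) by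
        rw [eq_div_iff (ne_of_gt (hpos n))]; field_simp; ring,
        Real.log_div (by positivity) (ne_of_gt (hpos n))]
    have e2 : Real.log (1+((n:ℝ)+1+a)⁻¹) = Real.log ((n:ℝ)+2+a) - Real.log ((n:ℝ)+1+a) := by
      rw [show (1:ℝ)+((n:ℝ)+1+a)⁻¹ = ((n:ℝ)+2+a)/((n:ℝ)+1+a) by
        rw [eq_div_iff (ne_of_gt (hposa n))]; field_simp; ring,
        Real.log_div (by positivity) (ne_of_gt (hposa n))]
    have e3 : u n = Real.log ((n:ℝ)+1+a) - Real.log ((n:ℝ)+1) := by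
      simp only [hudef]
      rw [Real.log_div (ne_of_gt (hposa n)) (ne_of_gt (hpos n))]
    have e4 : u (n+1) = Real.log ((n:ℝ)+2+a) - Real.log ((n:ℝ)+2) := by
      simp only [hudef]
      push_cast
      rw [Real.log_div (by positivity) (by positivity)]
      ring_nf
    simp only [htdef, e1, e2, e3, e4]
    ring
  have htnonneg : ∀ n, 0 ≤ t n := by
    intro n
    have : ((n:ℝ)+1+a)⁻¹ ≤ ((n:ℝ)+1)⁻¹ :=
      inv_anti₀ (hpos n) (by linarith)
    exact sub_nonneg.2 (Real.log_le_log (by positivity) (by linarith))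
  have hu0 : u 0 = Real.log (1+a) := by
    simp [hudef]
  have hulim : Tendsto u atTop (𝓝 0) := by
    have h1 : Tendsto (fun n : ℕ => ((n:ℝ)+1+a)/((n:ℝ)+1)) atTop (𝓝 1) := by
      have h2 : ∀ n : ℕ, ((n:ℝ)+1+a)/((n:ℝ)+1) = 1 + a * (1/((n:ℝ)+1)) := by
        intro n; field_simp
      simp only [h2]
      have := tendsto_one_div_add_atTop_nhds_zero_nat.const_mul a
      simpa using tendsto_const_nhds.add this
    have : Tendsto (fun x : ℝ => Real.log x) (𝓝 1) (𝓝 0) := by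
      simpa using (Real.continuousAt_log one_ne_zero).tendsto
    exact this.comp h1
  have hsum : HasSum t (Real.log (1+a)) := by
    rw [hasSum_iff_tendsto_nat_of_nonneg htnonneg]
    have hS : ∀ N, ∑ i ∈ Finset.range N, t i = u 0 - u N := by
      intro N
      simp only [ht]
      exact Finset.sum_range_sub' u N
    simp only [hS, hu0]
    simpa using tendsto_const_nhds.sub hulim
  rw [← ENNReal.ofReal_tsum_of_nonneg htnonneg hsum.summable, hsum.tsum_eq]

instance gaussμ_finite : IsFiniteMeasure gaussμ := by
  constructor
  rw [gaussμ_apply MeasurableSet.univ, Set.univ_inter]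
  calc ∫⁻ x in Ioo (0:ℝ) 1, ENNReal.ofReal ((1+x)⁻¹) ∂volume
      ≤ ∫⁻ _ in Ioo (0:ℝ) 1, 1 ∂volume := by
        refine setLIntegral_mono measurable_const fun x hx => ?_
        have : (1+x)⁻¹ ≤ 1 := by
          rw [inv_le_one_iff₀]; right; linarith [hx.1]
        exact ENNReal.ofReal_le_one.2 this
    _ < ⊤ := by simp [Real.volume_Ioo]

lemma gaussMap_nonneg (x : ℝ) : 0 ≤ gaussMap x := by
  unfold gaussMap
  split
  · exact le_rfl
  · exact Int.fract_nonneg _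

lemma gaussMap_lt_one (x : ℝ) : gaussMap x < 1 := by
  unfold gaussMap
  split
  · norm_num
  · exact Int.fract_lt_one _

theorem gaussMap_measurePreserving : MeasurePreserving gaussMap gaussμ gaussμ := by
  refine ⟨gaussMap_measurable, ?_⟩
  refine (Measure.ext_of_Iic gaussμ _ fun a => ?_).symm
  rw [Measure.map_apply gaussMap_measurable measurableSet_Iic]
  have hpre : MeasurableSet (gaussMap ⁻¹' Iic a) := gaussMap_measurable measurableSet_Iic
  rcases lt_or_ge a 0 with ha | ha
  · rw [gaussμ_apply measurableSet_Iic, gaussμ_apply hpre]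
    have h1 : Iic a ∩ Ioo (0:ℝ) 1 = ∅ := by
      ext x; simp only [mem_inter_iff, mem_Iic, mem_Ioo, mem_empty_iff_false, iff_false]
      rintro ⟨h1, h2, h3⟩; linarith
    have h2 : gaussMap ⁻¹' Iic a ∩ Ioo (0:ℝ) 1 = ∅ := by
      ext x; simp only [mem_inter_iff, mem_preimage, mem_Iic, mem_Ioo,
        mem_empty_iff_false, iff_false]
      rintro ⟨h1, h2, h3⟩
      linarith [gaussMap_nonneg x]
    rw [h1, h2]
  rcases le_or_gt 1 a with ha1 | ha1
  · rw [gaussμ_apply measurableSet_Iic, gaussμ_apply hpre]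
    have h1 : Iic a ∩ Ioo (0:ℝ) 1 = Ioo (0:ℝ) 1 := by
      apply inter_eq_self_of_subset_right
      intro x hx; exact le_trans hx.2.le ha1
    have h2 : gaussMap ⁻¹' Iic a ∩ Ioo (0:ℝ) 1 = Ioo (0:ℝ) 1 := by
      apply inter_eq_self_of_subset_right
      intro x _; exact le_trans (gaussMap_lt_one x).le ha1
    rw [h1, h2]
  -- main case 0 ≤ a < 1
  have hLHS : gaussμ (Iic a) = ENNReal.ofReal (Real.log (1+a)) := by
    rw [gaussμ_apply measurableSet_Iic]
    have h1 : Iic a ∩ Ioo (0:ℝ) 1 = Icc 0 a ∩ Ioo (0:ℝ) 1 := by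
      ext x
      simp only [mem_inter_iff, mem_Iic, mem_Ioo, mem_Icc]
      constructor
      · rintro ⟨h1, h2, h3⟩; exact ⟨⟨h2.le, h1⟩, h2, h3⟩
      · rintro ⟨⟨_, h1⟩, h2, h3⟩; exact ⟨h1, h2, h3⟩
    rw [h1, ← gaussμ_apply measurableSet_Icc, gaussμ_Icc le_rfl ha ha1.le]
    simp
  rw [hLHS]
  have hset : gaussMap ⁻¹' Iic a ∩ Ioo (0:ℝ) 1
      = (⋃ n : ℕ, Icc ((n:ℝ)+1+a)⁻¹ ((n:ℝ)+1)⁻¹) ∩ Ioo (0:ℝ) 1 := by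
    ext x
    simp only [mem_inter_iff, mem_preimage, mem_Iic, mem_iUnion, mem_Icc, mem_Ioo]
    constructor
    · rintro ⟨hga, hx0, hx1⟩
      refine ⟨?_, hx0, hx1⟩
      have hxne : x ≠ 0 := ne_of_gt hx0
      have hg : gaussMap x = Int.fract x⁻¹ := by simp [gaussMap, hxne, one_div]
      have hy1 : 1 < x⁻¹ := (one_lt_inv₀ hx0).2 hx1
      set n' : ℤ := ⌊x⁻¹⌋ with hn'
      have hn1 : 1 ≤ n' := Int.le_floor.2 (by exact_mod_cast hy1.le)
      refine ⟨(n' - 1).toNat, ?_, ?_⟩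
      · have hc : (((n' - 1).toNat : ℝ)) = (n':ℝ) - 1 := by
          have hge : (0:ℤ) ≤ n' - 1 := by omega
          have h' := Int.toNat_of_nonneg hge
          exact_mod_cast h'
        rw [hc]
        have h1 : x⁻¹ ≤ (n':ℝ) + a := by
          have := Int.self_sub_floor x⁻¹
          have hfr : Int.fract x⁻¹ ≤ a := by rw [hg] at hga; exact hga
          have : x⁻¹ - (n':ℝ) ≤ a := by
            rw [hn']; linarith [Int.self_sub_floor x⁻¹, hfr, Int.fract_nonneg x⁻¹]
          linarith
        have h2 : (0:ℝ) < x⁻¹ := by positivity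
        calc ((n':ℝ) - 1 + 1 + a)⁻¹ = ((n':ℝ) + a)⁻¹ := by ring_nf
          _ ≤ (x⁻¹)⁻¹ := inv_anti₀ h2 (by linarith)
          _ = x := inv_inv x
      · have hc : (((n' - 1).toNat : ℝ)) = (n':ℝ) - 1 := by
          have hge : (0:ℤ) ≤ n' - 1 := by omega
          have h' := Int.toNat_of_nonneg hge
          exact_mod_cast h'
        rw [hc]
        have h1 : ((n':ℝ)) ≤ x⁻¹ := Int.floor_le x⁻¹
        have hn'pos : (0:ℝ) < (n':ℝ) := by exact_mod_cast hn1
        calc x = (x⁻¹)⁻¹ := (inv_inv x).symm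
          _ ≤ ((n':ℝ))⁻¹ := inv_anti₀ hn'pos h1
          _ = ((n':ℝ) - 1 + 1)⁻¹ := by ring_nf
    · rintro ⟨⟨n, hc, hb⟩, hx0, hx1⟩
      refine ⟨?_, hx0, hx1⟩
      have hxne : x ≠ 0 := ne_of_gt hx0
      have hg : gaussMap x = Int.fract x⁻¹ := by simp [gaussMap, hxne, one_div]
      have hnpos : (0:ℝ) < (n:ℝ) + 1 := by positivity
      have h1 : (n:ℝ) + 1 ≤ x⁻¹ := by
        calc (n:ℝ) + 1 = (((n:ℝ)+1)⁻¹)⁻¹ := (inv_inv _).symm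
          _ ≤ x⁻¹ := inv_anti₀ hx0 hb
      have h2 : x⁻¹ ≤ (n:ℝ) + 1 + a := by
        have hcpos : (0:ℝ) < ((n:ℝ)+1+a)⁻¹ := by positivity
        calc x⁻¹ ≤ (((n:ℝ)+1+a)⁻¹)⁻¹ := inv_anti₀ hcpos hc
          _ = (n:ℝ) + 1 + a := inv_inv _
      have hfl : ⌊x⁻¹⌋ = (n:ℤ) + 1 := by
        rw [Int.floor_eq_iff]
        constructor
        · push_cast; linarith
        · push_cast; linarith
      rw [hg]
      have : Int.fract x⁻¹ = x⁻¹ - ((n:ℝ) + 1) := by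
        rw [← Int.self_sub_floor, hfl]; push_cast; ring
      rw [this]; linarith
  have hmeas : ∀ n : ℕ, MeasurableSet (Icc (((n:ℝ)+1+a)⁻¹) (((n:ℝ)+1)⁻¹)) :=
    fun n => measurableSet_Icc
  have hU : MeasurableSet (⋃ n : ℕ, Icc (((n:ℝ)+1+a)⁻¹) (((n:ℝ)+1)⁻¹)) :=
    MeasurableSet.iUnion hmeas
  have hdisj : Pairwise (Function.onFun Disjoint fun n : ℕ => Icc (((n:ℝ)+1+a)⁻¹) (((n:ℝ)+1)⁻¹)) := by
    rw [pairwise_disjoint_on]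
    intro m n hmn
    rw [Set.disjoint_left]
    intro x hxm hxn
    have hpos : (0:ℝ) < (m:ℝ)+1+a := by positivity
    have hlt : (m:ℝ)+1+a < (n:ℝ)+1 := by
      have : (m:ℝ) + 1 ≤ (n:ℝ) := by exact_mod_cast hmn
      linarith
    have : ((n:ℝ)+1)⁻¹ < ((m:ℝ)+1+a)⁻¹ := by
      apply inv_strictAnti₀ hpos hlt
    linarith [hxm.1, hxn.2]
  have hval : ∀ n : ℕ, gaussμ (Icc (((n:ℝ)+1+a)⁻¹) (((n:ℝ)+1)⁻¹))
      = ENNReal.ofReal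
        (Real.log (1+((n:ℝ)+1)⁻¹) - Real.log (1+((n:ℝ)+1+a)⁻¹)) := by
    intro n
    have hn1 : (0:ℝ) < (n:ℝ)+1 := by positivity
    refine gaussμ_Icc (by positivity) (inv_anti₀ hn1 (by linarith)) ?_
    rw [inv_le_one_iff₀]; right; linarith
  calc ENNReal.ofReal (Real.log (1+a))
      = ∑' n : ℕ, ENNReal.ofReal
          (Real.log (1+((n:ℝ)+1)⁻¹) - Real.log (1+((n:ℝ)+1+a)⁻¹)) :=
        (gauss_telescope ha).symm
    _ = ∑' n : ℕ, gaussμ (Icc (((n:ℝ)+1+a)⁻¹) (((n:ℝ)+1)⁻¹)) := by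
        exact (tsum_congr hval).symm
    _ = gaussμ (⋃ n : ℕ, Icc (((n:ℝ)+1+a)⁻¹) (((n:ℝ)+1)⁻¹)) :=
        (measure_iUnion hdisj hmeas).symm
    _ = gaussμ (gaussMap ⁻¹' Iic a) := by
        rw [gaussμ_apply hU, gaussμ_apply hpre, hset]


lemma gaussMap_iterate_mem (k : ℕ) {x : ℝ} (hx : x ∈ Ioo (0:ℝ) 1) (hirr : Irrational x) :
    gaussMap^[k] x ∈ Ioo (0:ℝ) 1 ∧ Irrational (gaussMap^[k] x) := by
  induction k with
  | zero => exact ⟨hx, hirr⟩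
  | succ n ih =>
    rw [Function.iterate_succ_apply']
    exact gaussMap_mem _ ih.1 ih.2

lemma cfA_ge_one {α : ℝ} (hα : α ∈ Ioo (0:ℝ) 1) (hirr : Irrational α) (n : ℕ) :
    (1:ℤ) ≤ cfA α n := by
  obtain ⟨hx, -⟩ := gaussMap_iterate_mem (n-1) hα hirr
  refine Int.le_floor.2 ?_
  push_cast
  rw [le_div_iff₀ hx.1]
  linarith [hx.2]

lemma cfQ_ge {α : ℝ} (hα : α ∈ Ioo (0:ℝ) 1) (hirr : Irrational α) :
    ∀ n : ℕ, Real.sqrt 2 ^ (n-1) ≤ ((cfQ α n : ℤ) : ℝ) := by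
  have hs1 : (1:ℝ) ≤ Real.sqrt 2 := by
    rw [show (1:ℝ) = Real.sqrt 1 by simp]
    exact Real.sqrt_le_sqrt (by norm_num)
  have hs2 : Real.sqrt 2 ^ 2 = 2 := Real.sq_sqrt (by norm_num)
  have hA : ∀ n, (1:ℝ) ≤ ((cfA α n : ℤ):ℝ) := fun n => by
    exact_mod_cast cfA_ge_one hα hirr n
  have key : ∀ n : ℕ, Real.sqrt 2 ^ (n-1) ≤ ((cfQ α n : ℤ) : ℝ)
      ∧ Real.sqrt 2 ^ n ≤ ((cfQ α (n+1) : ℤ) : ℝ) := by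
    intro n
    induction n with
    | zero =>
      constructor
      · simp [cfQ]
      · simpa [cfQ] using hA 1
    | succ m ih =>
      refine ⟨by simpa using ih.2, ?_⟩
      have hq2 : ((cfQ α (m+2) : ℤ):ℝ) = ((cfA α (m+2):ℤ):ℝ) * ((cfQ α (m+1):ℤ):ℝ)
          + ((cfQ α m:ℤ):ℝ) := by
        rw [show cfQ α (m+2) = cfA α (m+2) * cfQ α (m+1) + cfQ α m from rfl]
        push_cast; ring
      have h1 : (0:ℝ) < Real.sqrt 2 ^ m := by positivity
      have hqm1 : Real.sqrt 2 ^ m ≤ ((cfQ α (m+1):ℤ):ℝ) := ih.2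
      have hqm : Real.sqrt 2 ^ (m-1) ≤ ((cfQ α m:ℤ):ℝ) := ih.1
      have hstep : Real.sqrt 2 ^ m + Real.sqrt 2 ^ (m-1) ≤ ((cfQ α (m+2):ℤ):ℝ) := by
        rw [hq2]
        have := hA (m+2)
        nlinarith [hqm1, hqm, h1, pow_pos (lt_of_lt_of_le one_pos hs1) (m-1)]
      refine le_trans ?_ hstep
      match m with
      | 0 =>
        have h22 : Real.sqrt 2 ≤ 2 := by nlinarith [hs2, Real.sqrt_nonneg 2]
        simp only [Nat.zero_sub, pow_zero, zero_add, pow_one]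
        linarith
      | (j+1) =>
        have : Real.sqrt 2 ^ (j+2) = Real.sqrt 2 ^ j * Real.sqrt 2 ^ 2 := by ring
        have h2 : Real.sqrt 2 ^ (j+1) + Real.sqrt 2 ^ j = Real.sqrt 2 ^ j * (Real.sqrt 2 + 1) := by
          ring
        simp only [Nat.add_sub_cancel]
        rw [this, h2, hs2]
        have hj : (0:ℝ) < Real.sqrt 2 ^ j := by positivity
        nlinarith
  exact fun n => (key n).1

lemma log_cfQ_ge {α : ℝ} (hα : α ∈ Ioo (0:ℝ) 1) (hirr : Irrational α) {k : ℕ} (hk : 2 ≤ k) :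
    ((k:ℝ)-1) * (Real.log 2 / 2) ≤ Real.log ((cfQ α k : ℤ) : ℝ) := by
  have h := cfQ_ge hα hirr k
  have hppos : (0:ℝ) < Real.sqrt 2 ^ (k-1) := by positivity
  have h2 : Real.log (Real.sqrt 2 ^ (k-1)) ≤ Real.log ((cfQ α k : ℤ):ℝ) :=
    Real.log_le_log hppos h
  rw [Real.log_pow, Real.log_sqrt (by norm_num)] at h2
  have hc : ((k-1 : ℕ):ℝ) = (k:ℝ) - 1 := by
    have : 1 ≤ k := le_trans one_le_two hk
    push_cast [this]; ring
  rw [hc] at h2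
  exact h2

lemma cfA_measurable (n : ℕ) : Measurable fun α => cfA α n := by
  unfold cfA
  exact Measurable.floor ((gaussMap_measurable.iterate (n-1)).const_div 1)

lemma cfQ_measurable : ∀ k, Measurable fun α => cfQ α k := by
  intro k
  induction k using Nat.strong_induction_on with
  | _ k ih =>
    match k with
    | 0 => exact measurable_const
    | 1 => exact cfA_measurable 1
    | (n+2) =>
      have h1 : Measurable fun α => cfQ α (n+1) := ih (n+1) (by omega)
      have h2 : Measurable fun α => cfQ α n := ih n (by omega)
      exact ((cfA_measurable (n+2)).mul h1).add h2


lemma vol_le_two_gaussμ {S : Set ℝ} (hS : MeasurableSet S) (hsub : S ⊆ Ioo (0:ℝ) 1) :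
    volume S ≤ 2 * gaussμ S := by
  have h0 : gaussμ S = ∫⁻ x in S, ENNReal.ofReal ((1+x)⁻¹) ∂volume := by
    rw [gaussμ_apply hS, inter_eq_self_of_subset_left hsub]
  have h2 : ENNReal.ofReal 2⁻¹ * volume S ≤ gaussμ S := by
    rw [h0, ← setLIntegral_const S (ENNReal.ofReal 2⁻¹)]
    refine setLIntegral_mono (((measurable_const.add measurable_id).inv).ennreal_ofReal) fun x hx => ?_
    have hx' := hsub hx
    have h1x : (0:ℝ) < 1 + x := by linarith [hx'.1]
    refine ENNReal.ofReal_le_ofReal ?_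
    have : 1 + x ≤ 2 := by linarith [hx'.2]
    exact inv_anti₀ h1x this
  have h21 : (2:ENNReal) * ENNReal.ofReal 2⁻¹ = 1 := by
    rw [(by norm_num : (2:ENNReal) = ENNReal.ofReal 2), ← ENNReal.ofReal_mul (by norm_num)]
    norm_num
  calc volume S = 2 * (ENNReal.ofReal 2⁻¹ * volume S) := by
        rw [← mul_assoc, h21, one_mul]
    _ ≤ 2 * gaussμ S := mul_le_mul_right h2 2
  -- done

lemma gaussμ_le_vol {S : Set ℝ} (hS : MeasurableSet S) : gaussμ S ≤ volume S := by
  rw [gaussμ_apply hS]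
  calc ∫⁻ x in S ∩ Ioo (0:ℝ) 1, ENNReal.ofReal ((1+x)⁻¹) ∂volume
      ≤ ∫⁻ _ in S ∩ Ioo (0:ℝ) 1, 1 ∂volume := by
        refine setLIntegral_mono measurable_const fun x hx => ?_
        refine ENNReal.ofReal_le_one.2 ?_
        rw [inv_le_one_iff₀]; right; linarith [hx.2.1]
    _ = volume (S ∩ Ioo (0:ℝ) 1) := by
        rw [setLIntegral_const, one_mul]
    _ ≤ volume S := measure_mono inter_subset_left

lemma measurableSet_irrational : MeasurableSet {α : ℝ | Irrational α} := by
  have : {α : ℝ | Irrational α} = (Set.range ((↑) : ℚ → ℝ))ᶜ := rfl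
  rw [this]
  exact (Set.countable_range _).measurableSet.compl

lemma key_measure (k : ℕ) {t : ℝ} (ht : 0 < t) :
    volume ({α : ℝ | Irrational α} ∩ Ioo (0:ℝ) 1 ∩ (gaussMap^[k]) ⁻¹' (Ioo 0 t⁻¹))
      ≤ 2 * ENNReal.ofReal t⁻¹ := by
  set S := {α : ℝ | Irrational α} ∩ Ioo (0:ℝ) 1 ∩ (gaussMap^[k]) ⁻¹' (Ioo 0 t⁻¹) with hSdef
  have hSmeas : MeasurableSet S :=
    (measurableSet_irrational.inter measurableSet_Ioo).inter
      ((gaussMap_measurable.iterate k) measurableSet_Ioo)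
  have hsub : S ⊆ Ioo (0:ℝ) 1 := fun x hx => hx.1.2
  calc volume S ≤ 2 * gaussμ S := vol_le_two_gaussμ hSmeas hsub
    _ ≤ 2 * gaussμ ((gaussMap^[k]) ⁻¹' (Ioo 0 t⁻¹)) :=
        mul_le_mul_right (measure_mono inter_subset_right) 2
    _ = 2 * gaussμ (Ioo 0 t⁻¹) := by
        rw [(gaussMap_measurePreserving.iterate k).measure_preimage
          measurableSet_Ioo.nullMeasurableSet]
    _ ≤ 2 * volume (Ioo 0 t⁻¹) := mul_le_mul_right (gaussμ_le_vol measurableSet_Ioo) 2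
    _ ≤ 2 * ENNReal.ofReal t⁻¹ := by
        rw [Real.volume_Ioo]
        simp

/-- full measure of the Fayad–Kanigowski Ratner condition: for almost
every `α ∈ (0,1)` there is `C > 0` such that, summing `1/(log q_k)^{7/8}` over the
indices `k ≥ 2` with `a_{k+1}(α) > C (log q_k(α))^{7/8}`, the series converges. -/
theorem ae_fayad_kanigowski_condition :
    ∀ᵐ α : ℝ ∂(MeasureTheory.volume), α ∈ Set.Ioo (0:ℝ) 1 →
      ∃ C > (0:ℝ), Summable (fun k : ℕ =>
        if 2 ≤ k ∧ ¬ ((cfA α (k + 1) : ℝ) ≤ C * (Real.log (cfQ α k)) ^ ((7:ℝ)/8))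
        then 1 / (Real.log (cfQ α k)) ^ ((7:ℝ)/8)
        else 0) := by
  classical
  have hIrrAE : ∀ᵐ α : ℝ ∂volume, Irrational α := by
    rw [ae_iff]
    have h : {α : ℝ | ¬Irrational α} = Set.range ((↑) : ℚ → ℝ) := by
      ext x; simp [Irrational]
    rw [h]
    exact (Set.countable_range _).measure_zero _
  set L : ℝ := Real.log 2 / 2 with hLdef
  have hL : 0 < L := div_pos (Real.log_pos one_lt_two) two_pos
  set c : ℕ → ℝ := fun k => ((k:ℝ)-1) * L with hcdef
  have hcpos : ∀ k : ℕ, 2 ≤ k → 0 < c k := by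
    intro k hk
    have : (2:ℝ) ≤ (k:ℝ) := by exact_mod_cast hk
    exact mul_pos (by linarith) hL
  set t : ℕ → ℝ := fun k => c k ^ ((7:ℝ)/8) with htdef
  have htpos : ∀ k : ℕ, 2 ≤ k → 0 < t k := fun k hk => Real.rpow_pos_of_pos (hcpos k hk) _
  set F : ℝ → ℕ → ℝ := fun α k =>
    if 2 ≤ k ∧ ¬ ((cfA α (k + 1) : ℝ) ≤ 1 * (Real.log (cfQ α k)) ^ ((7:ℝ)/8))
    then 1 / (Real.log (cfQ α k)) ^ ((7:ℝ)/8) else 0 with hFdef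
  have hFmeas : ∀ k, Measurable fun α => F α k := by
    intro k
    have hg : Measurable fun α => 1 * (Real.log ((cfQ α k : ℤ):ℝ)) ^ ((7:ℝ)/8) := by
      refine Measurable.const_mul ?_ 1
      exact (Real.measurable_log.comp ((measurable_of_countable (fun z : ℤ => (z:ℝ))).comp (cfQ_measurable k))).pow_const _
    have hf : Measurable fun α => ((cfA α (k+1) : ℤ):ℝ) := (measurable_of_countable (fun z : ℤ => (z:ℝ))).comp (cfA_measurable (k+1))
    have hcond : MeasurableSet {α : ℝ | 2 ≤ k ∧
        ¬ ((cfA α (k + 1) : ℝ) ≤ 1 * (Real.log ((cfQ α k : ℤ):ℝ)) ^ ((7:ℝ)/8))} := by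
      by_cases hk : 2 ≤ k
      · have : {α : ℝ | 2 ≤ k ∧ ¬ ((cfA α (k + 1) : ℝ) ≤ 1 * (Real.log ((cfQ α k:ℤ):ℝ)) ^ ((7:ℝ)/8))}
            = {α : ℝ | (cfA α (k + 1) : ℝ) ≤ 1 * (Real.log ((cfQ α k:ℤ):ℝ)) ^ ((7:ℝ)/8)}ᶜ := by
          ext α; simp [hk]
        rw [this]
        exact (measurableSet_le hf hg).compl
      · have : {α : ℝ | 2 ≤ k ∧ ¬ ((cfA α (k + 1) : ℝ) ≤ 1 * (Real.log ((cfQ α k:ℤ):ℝ)) ^ ((7:ℝ)/8))}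
            = ∅ := by
          ext α; simp [hk]
        rw [this]; exact MeasurableSet.empty
    exact Measurable.ite hcond ((measurable_const.div
      ((Real.measurable_log.comp ((measurable_of_countable (fun z : ℤ => (z:ℝ))).comp (cfQ_measurable k))).pow_const _))) measurable_const
  set T : ℕ → Set ℝ := fun k =>
    if 2 ≤ k then
      {α : ℝ | Irrational α} ∩ Ioo (0:ℝ) 1 ∩ (gaussMap^[k]) ⁻¹' (Ioo 0 (t k)⁻¹)
    else ∅ with hTdef
  have hTmeas : ∀ k, MeasurableSet (T k) := by
    intro k
    by_cases hk : 2 ≤ k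
    · have hT : T k = {α : ℝ | Irrational α} ∩ Ioo (0:ℝ) 1
          ∩ (gaussMap^[k]) ⁻¹' (Ioo 0 (t k)⁻¹) := by simp [hTdef, hk]
      rw [hT]
      exact (measurableSet_irrational.inter measurableSet_Ioo).inter
        ((gaussMap_measurable.iterate k) measurableSet_Ioo)
    · have hT : T k = ∅ := by simp [hTdef, hk]
      rw [hT]; exact MeasurableSet.empty
  have hdom : ∀ α ∈ Ioo (0:ℝ) 1, Irrational α → ∀ k,
      ENNReal.ofReal (F α k) ≤ (T k).indicator (fun _ => ENNReal.ofReal (t k)⁻¹) α := by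
    intro α hα hirr k
    by_cases hcond : 2 ≤ k ∧ ¬ ((cfA α (k + 1) : ℝ) ≤ 1 * (Real.log ((cfQ α k:ℤ):ℝ)) ^ ((7:ℝ)/8))
    · obtain ⟨hk2, hgt⟩ := hcond
      push_neg at hgt
      rw [one_mul] at hgt
      have hlog : c k ≤ Real.log ((cfQ α k:ℤ):ℝ) := log_cfQ_ge hα hirr hk2
      have hck := hcpos k hk2
      have ht_le : t k ≤ (Real.log ((cfQ α k:ℤ):ℝ)) ^ ((7:ℝ)/8) :=
        Real.rpow_le_rpow hck.le hlog (by norm_num)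
      obtain ⟨hxmem, -⟩ := gaussMap_iterate_mem k hα hirr
      have htk := htpos k hk2
      have hfloor : cfA α (k+1) = ⌊1 / gaussMap^[k] α⌋ := by
        simp [cfA]
      have hfloor_gt : t k < ((⌊1 / gaussMap^[k] α⌋ : ℤ):ℝ) := by
        rw [← hfloor]
        exact lt_of_le_of_lt ht_le hgt
      have hinv_gt : t k < (gaussMap^[k] α)⁻¹ := by
        have h1 : ((⌊1 / gaussMap^[k] α⌋ : ℤ):ℝ) ≤ 1 / gaussMap^[k] α := Int.floor_le _
        have h2 : t k < 1 / gaussMap^[k] α := lt_of_lt_of_le hfloor_gt h1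
        rwa [one_div] at h2
      have hxt : gaussMap^[k] α < (t k)⁻¹ := by
        have := inv_strictAnti₀ htk hinv_gt
        rwa [inv_inv] at this
      have hmem : α ∈ T k := by
        have hT : T k = {α : ℝ | Irrational α} ∩ Ioo (0:ℝ) 1
            ∩ (gaussMap^[k]) ⁻¹' (Ioo 0 (t k)⁻¹) := by simp [hTdef, hk2]
        rw [hT]
        exact ⟨⟨hirr, hα⟩, hxmem.1, hxt⟩
      rw [indicator_of_mem hmem]
      refine ENNReal.ofReal_le_ofReal ?_
      have hFval : F α k = 1 / (Real.log ((cfQ α k:ℤ):ℝ)) ^ ((7:ℝ)/8) := by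
        rw [hFdef]
        exact if_pos ⟨hk2, by rw [one_mul]; exact not_le.2 hgt⟩
      rw [hFval, one_div]
      exact inv_anti₀ htk ht_le
    · have : F α k = 0 := by rw [hFdef]; exact if_neg hcond
      rw [this]
      simp
  -- summable majorant
  set g : ℕ → ℝ := fun k => if 2 ≤ k then 2 * ((t k)⁻¹ * (t k)⁻¹) else 0 with hgdef
  have hgnn : ∀ k, 0 ≤ g k := by
    intro k
    rw [hgdef]
    dsimp only
    split
    · have := htpos k (by assumption)
      positivity
    · exact le_rfl
  have hgsum : Summable g := by
    rw [← summable_nat_add_iff 2]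
    have hbase : Summable (fun n : ℕ => ((((n:ℝ)+1) ^ ((7:ℝ)/4))⁻¹)) := by
      have h1 : Summable (fun n : ℕ => ((n:ℝ) ^ (-((7:ℝ)/4)))) :=
        Real.summable_nat_rpow.2 (by norm_num)
      have h2 := (summable_nat_add_iff 1).1 ((summable_nat_add_iff 1).2 h1)
      have h3 := (summable_nat_add_iff 1).2 h1
      refine h3.congr fun n => ?_
      push_cast
      rw [Real.rpow_neg (by positivity)]
    have hval : ∀ n : ℕ, g (n+2) = 2 * (L ^ ((7:ℝ)/4))⁻¹ * ((((n:ℝ)+1) ^ ((7:ℝ)/4))⁻¹) := by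
      intro n
      have hk2 : 2 ≤ n + 2 := by omega
      have hc2 : c (n+2) = ((n:ℝ)+1) * L := by
        rw [hcdef]; push_cast; ring
      have hcpos' : (0:ℝ) < ((n:ℝ)+1) * L := by positivity
      rw [hgdef]
      dsimp only
      rw [if_pos hk2]
      have htt : (t (n+2))⁻¹ * (t (n+2))⁻¹ = ((((n:ℝ)+1) * L) ^ ((7:ℝ)/4))⁻¹ := by
        rw [htdef]
        dsimp only
        rw [hc2, ← mul_inv, ← Real.rpow_add hcpos']
        norm_num
      rw [htt, Real.mul_rpow (by positivity) hL.le, mul_inv]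
      ring
    refine Summable.congr (hbase.mul_left (2 * (L ^ ((7:ℝ)/4))⁻¹)) fun n => ?_
    exact (hval n).symm
  -- integral estimate
  have hint : ∫⁻ α in Ioo (0:ℝ) 1, ∑' k, ENNReal.ofReal (F α k) ∂volume ≠ ⊤ := by
    have hb1 : ∫⁻ α in Ioo (0:ℝ) 1, ∑' k, ENNReal.ofReal (F α k) ∂volume
        ≤ ∑' k, ENNReal.ofReal (g k) := by
      calc ∫⁻ α in Ioo (0:ℝ) 1, ∑' k, ENNReal.ofReal (F α k) ∂volume
          ≤ ∫⁻ α in Ioo (0:ℝ) 1,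
              ∑' k, (T k).indicator (fun _ => ENNReal.ofReal (t k)⁻¹) α ∂volume := by
            refine lintegral_mono_ae ?_
            filter_upwards [ae_restrict_of_ae hIrrAE, self_mem_ae_restrict measurableSet_Ioo]
              with α hirr hmem
            exact ENNReal.tsum_le_tsum (hdom α hmem hirr)
        _ = ∑' k, ∫⁻ α in Ioo (0:ℝ) 1,
              (T k).indicator (fun _ => ENNReal.ofReal (t k)⁻¹) α ∂volume :=
            lintegral_tsum fun k => (measurable_const.indicator (hTmeas k)).aemeasurable
        _ ≤ ∑' k, ENNReal.ofReal (g k) := by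
            refine ENNReal.tsum_le_tsum fun k => ?_
            rw [lintegral_indicator (hTmeas k), setLIntegral_const,
              Measure.restrict_apply (hTmeas k)]
            by_cases hk : 2 ≤ k
            · have hT : T k = {α : ℝ | Irrational α} ∩ Ioo (0:ℝ) 1
                  ∩ (gaussMap^[k]) ⁻¹' (Ioo 0 (t k)⁻¹) := by simp [hTdef, hk]
              have htk := htpos k hk
              have hkey : volume (T k ∩ Ioo (0:ℝ) 1) ≤ 2 * ENNReal.ofReal (t k)⁻¹ := by
                refine le_trans (measure_mono inter_subset_left) ?_
                rw [hT]
                exact key_measure k htk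
              have hgk : g k = 2 * ((t k)⁻¹ * (t k)⁻¹) := by
                rw [hgdef]; exact if_pos hk
              calc ENNReal.ofReal (t k)⁻¹ * volume (T k ∩ Ioo (0:ℝ) 1)
                  ≤ ENNReal.ofReal (t k)⁻¹ * (2 * ENNReal.ofReal (t k)⁻¹) :=
                    mul_le_mul_right hkey _
                _ = ENNReal.ofReal (g k) := by
                    rw [hgk, ENNReal.ofReal_mul (by norm_num),
                      ENNReal.ofReal_mul (by positivity : (0:ℝ) ≤ (t k)⁻¹),
                      (by norm_num : ENNReal.ofReal (2:ℝ) = 2)]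
                    ring
            · have hT : T k = ∅ := by simp [hTdef, hk]
              rw [hT]
              simp
    have hb2 : ∑' k, ENNReal.ofReal (g k) < ⊤ := by
      rw [← ENNReal.ofReal_tsum_of_nonneg hgnn hgsum]
      exact ENNReal.ofReal_lt_top
    exact (lt_of_le_of_lt hb1 hb2).ne
  -- extract a.e. conclusion
  have hmeastot : Measurable fun α => ∑' k, ENNReal.ofReal (F α k) :=
    Measurable.ennreal_tsum fun k => (hFmeas k).ennreal_ofReal
  have haelt := ae_lt_top hmeastot hint
  rw [ae_restrict_iff' measurableSet_Ioo] at haelt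
  filter_upwards [haelt, hIrrAE] with α h1 hirr
  intro hmem
  refine ⟨1, one_pos, ?_⟩
  have hfin := (h1 hmem).ne
  have hnn : ∀ k, 0 ≤ F α k := by
    intro k
    by_cases hcond : 2 ≤ k ∧
        ¬ ((cfA α (k + 1) : ℝ) ≤ 1 * (Real.log ((cfQ α k:ℤ):ℝ)) ^ ((7:ℝ)/8))
    · have hlog : c k ≤ Real.log ((cfQ α k:ℤ):ℝ) := log_cfQ_ge hmem hirr hcond.1
      have hlp : (0:ℝ) < Real.log ((cfQ α k:ℤ):ℝ) := lt_of_lt_of_le (hcpos k hcond.1) hlog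
      have hFv : F α k = 1 / (Real.log ((cfQ α k:ℤ):ℝ)) ^ ((7:ℝ)/8) := by
        rw [hFdef]; exact if_pos hcond
      rw [hFv]; positivity
    · have hFv : F α k = 0 := by rw [hFdef]; exact if_neg hcond
      rw [hFv]
  have hco : ∀ k, ENNReal.ofReal (F α k) = ((‖F α k‖₊ : NNReal) : ENNReal) := by
    intro k; rw [← Real.enorm_eq_ofReal (hnn k)]; rfl
  simp only [hco] at hfin
  have hsum : Summable fun k => ‖F α k‖₊ := ENNReal.tsum_coe_ne_top_iff_summable.1 hfin
  exact Summable.of_nnnorm hsum
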